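/- arXiv:0801.1230 — 3 statements merged into one kernel-verified Lean document; each statement's English description precedes it below -/
import Mathlib

section
/- Let R be a Bézout domain and let f : M → N be an R-linear map between finite free R-modules. Then the image of f and the kernel of f are both finite free R-modules, and the short exact sequence 0 → ker f → M → im f → 0 splits. -/
section Aux

variable {R : Type*} [CommRing R] [IsDomain R] [IsBezout R]

/-- A split surjection `g : A → B` (with splitting `t`) gives `A ≃ ker g × B`. -/
noncomputable def splitEquiv {A B : Type*} [AddCommGroup A] [AddCommGroup B]
    [Module R A] [Module R B] (g : A →ₗ[R] B) (t : B →ₗ[R] A)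
    (ht : g ∘ₗ t = LinearMap.id) : A ≃ₗ[R] (LinearMap.ker g × B) := by
  have hgt : ∀ b, g (t b) = b := fun b => congrArg (fun h => h b) ht
  refine LinearEquiv.ofLinear
    (LinearMap.prod
      (LinearMap.codRestrict (LinearMap.ker g) (LinearMap.id - t ∘ₗ g) ?_) g)
    (LinearMap.coprod (LinearMap.ker g).subtype t) ?_ ?_
  · intro a
    simp [hgt]
  · apply LinearMap.ext
    rintro ⟨⟨k, hk⟩, b⟩
    have hk' : g k = 0 := hk
    ext
    · simp [hk', hgt]
    · simp [hk', hgt]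
  · apply LinearMap.ext
    intro a
    simp

/-- The key lemma: a finitely generated submodule of `Fin n → R` over a Bézout
domain is free (and finite). -/
theorem free_and_finite_of_fg_pi :
    ∀ (n : ℕ) (S : Submodule R (Fin n → R)), S.FG →
      Module.Free R S ∧ Module.Finite R S := by
  intro n
  induction n with
  | zero =>
    intro S hS
    have : Subsingleton S := ⟨fun a b => Subtype.ext (Subsingleton.elim _ _)⟩
    exact ⟨Module.Free.of_subsingleton R S, Module.Finite.of_surjective (0 : R →ₗ[R] S)
      (fun x => ⟨0, Subsingleton.elim _ _⟩)⟩
  | succ n ih =>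
    intro S hS
    haveI : Module.Finite R S := (Module.Finite.iff_fg).mpr hS
    -- the projection to the last coordinate
    set π : (Fin (n + 1) → R) →ₗ[R] R := LinearMap.proj (Fin.last n) with hπ
    set g : S →ₗ[R] R := π ∘ₗ S.subtype with hg
    -- the image of `S` under `π` is a f.g. ideal, hence principal, hence free
    have hrangefg : (LinearMap.range g).FG := by
      have : Module.Finite R (LinearMap.range g) :=
        Module.Finite.of_surjective g.rangeRestrict (LinearMap.surjective_rangeRestrict g)
      exact (Module.Finite.iff_fg).mp this
    obtain ⟨a, ha⟩ := (IsBezout.isPrincipal_of_FG (LinearMap.range g) hrangefg)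
    have hJfree : Module.Free R (LinearMap.range g) := by
      by_cases h0 : a = 0
      · subst h0
        rw [show Submodule.span R {(0 : R)} = ⊥ from Submodule.span_zero_singleton R] at ha
        haveI : Subsingleton (LinearMap.range g) := by rw [ha]; infer_instance
        exact Module.Free.of_subsingleton R _
      · have e : R ≃ₗ[R] (Submodule.span R {a}) :=
          LinearEquiv.toSpanNonzeroSingleton R R a h0
        have e2 : (LinearMap.range g) ≃ₗ[R] (Submodule.span R {a}) := by
          rw [ha]
        exact Module.Free.of_equiv (e ≪≫ₗ e2.symm)
    haveI := hJfree
    -- split the surjection S → range g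
    obtain ⟨t, ht⟩ := Module.projective_lifting_property g.rangeRestrict
      (LinearMap.id : (LinearMap.range g) →ₗ[R] (LinearMap.range g))
      (LinearMap.surjective_rangeRestrict g)
    set g' : S →ₗ[R] (LinearMap.range g) := g.rangeRestrict with hg'
    have e : S ≃ₗ[R] (LinearMap.ker g' × LinearMap.range g) := splitEquiv g' t ht
    -- the kernel is finite
    haveI : Module.Finite R (LinearMap.ker g' × LinearMap.range g) :=
      Module.Finite.of_surjective e.toLinearMap e.surjective
    haveI : Module.Finite R (LinearMap.ker g') :=
      Module.Finite.of_surjective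
        (LinearMap.fst R (LinearMap.ker g') (LinearMap.range g)) (fun x => ⟨(x, 0), rfl⟩)
    -- embed the kernel into `Fin n → R`
    set ρ : (Fin (n + 1) → R) →ₗ[R] (Fin n → R) :=
      LinearMap.funLeft R R Fin.castSucc with hρ
    set ψ : (LinearMap.ker g') →ₗ[R] (Fin n → R) :=
      ρ ∘ₗ S.subtype ∘ₗ (LinearMap.ker g').subtype with hψ
    have hinj : Function.Injective ψ := by
      intro x y hxy
      have hx : g' x.1 = 0 := x.2
      have hy : g' y.1 = 0 := y.2
      have hx' : (x.1 : Fin (n + 1) → R) (Fin.last n) = 0 := congrArg Subtype.val hx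
      have hy' : (y.1 : Fin (n + 1) → R) (Fin.last n) = 0 := congrArg Subtype.val hy
      ext i
      refine Fin.lastCases ?_ ?_ i
      · rw [hx', hy']
      · intro j
        exact congrArg (fun h => h j) hxy
    have hQfg : Module.Finite R (LinearMap.range ψ) :=
      Module.Finite.of_surjective ψ.rangeRestrict (LinearMap.surjective_rangeRestrict ψ)
    obtain ⟨hQfree, _⟩ := ih (LinearMap.range ψ)
      ((Module.Finite.iff_fg).mp hQfg)
    have eker : (LinearMap.ker g') ≃ₗ[R] (LinearMap.range ψ) :=
      LinearEquiv.ofInjective ψ hinj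
    haveI : Module.Free R (LinearMap.ker g') := Module.Free.of_equiv eker.symm
    haveI : Module.Free R (LinearMap.ker g' × LinearMap.range g) := inferInstance
    exact ⟨Module.Free.of_equiv e.symm, inferInstance⟩

/-- A finitely generated submodule of a finite free module over a Bézout domain
is free and finite. -/
theorem free_and_finite_of_fg_submodule {P : Type*} [AddCommGroup P] [Module R P]
    [Module.Free R P] [Module.Finite R P] (S : Submodule R P) (hS : S.FG) :
    Module.Free R S ∧ Module.Finite R S := by
  classical
  let b := Module.Free.chooseBasis R P
  let ι := Module.Free.ChooseBasisIndex R P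
  let e : P ≃ₗ[R] (ι → R) := b.equivFun
  let e2 : (ι → R) ≃ₗ[R] (Fin (Fintype.card ι) → R) :=
    LinearEquiv.funCongrLeft R R (Fintype.equivFin ι).symm
  let E : P ≃ₗ[R] (Fin (Fintype.card ι) → R) := e ≪≫ₗ e2
  have hmapfg : (S.map E.toLinearMap).FG := Submodule.FG.map _ hS
  obtain ⟨hfree, hfin⟩ := free_and_finite_of_fg_pi (Fintype.card ι) (S.map E.toLinearMap) hmapfg
  have eS : S ≃ₗ[R] (S.map E.toLinearMap) :=
    Submodule.equivMapOfInjective E.toLinearMap E.injective S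
  exact ⟨Module.Free.of_equiv eS.symm, Module.Finite.equiv eS.symm⟩

end Aux

/-- Over a Bézout domain, the kernel and image of a linear map between finite free
modules are finite free, and the sequence `0 → ker f → M → im f → 0` splits. -/
theorem kernel_image_free_and_split_of_isBezout
    {R M N : Type*} [CommRing R] [IsDomain R] [IsBezout R]
    [AddCommGroup M] [Module R M] [Module.Free R M] [Module.Finite R M]
    [AddCommGroup N] [Module R N] [Module.Free R N] [Module.Finite R N]
    (f : M →ₗ[R] N) :
    Module.Free R ↥(LinearMap.range f) ∧ Module.Finite R ↥(LinearMap.range f) ∧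
    Module.Free R ↥(LinearMap.ker f) ∧ Module.Finite R ↥(LinearMap.ker f) ∧
    ∃ s : ↥(LinearMap.range f) →ₗ[R] M, f.rangeRestrict ∘ₗ s = LinearMap.id := by
  have hrangefg : (LinearMap.range f).FG := by
    have : Module.Finite R (LinearMap.range f) :=
      Module.Finite.of_surjective f.rangeRestrict (LinearMap.surjective_rangeRestrict f)
    exact (Module.Finite.iff_fg).mp this
  obtain ⟨hRfree, hRfin⟩ := free_and_finite_of_fg_submodule (LinearMap.range f) hrangefg
  haveI := hRfree
  haveI := hRfin
  obtain ⟨s, hs⟩ := Module.projective_lifting_property f.rangeRestrict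
    (LinearMap.id : (LinearMap.range f) →ₗ[R] (LinearMap.range f))
    (LinearMap.surjective_rangeRestrict f)
  have e : M ≃ₗ[R] (LinearMap.ker f.rangeRestrict × LinearMap.range f) :=
    splitEquiv f.rangeRestrict s hs
  have hker : LinearMap.ker f.rangeRestrict = LinearMap.ker f := LinearMap.ker_rangeRestrict f
  rw [hker] at e
  haveI : Module.Finite R (LinearMap.ker f × LinearMap.range f) :=
    Module.Finite.of_surjective e.toLinearMap e.surjective
  haveI hkfin : Module.Finite R (LinearMap.ker f) :=
    Module.Finite.of_surjective
      (LinearMap.fst R (LinearMap.ker f) (LinearMap.range f)) (fun x => ⟨(x, 0), rfl⟩)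
  obtain ⟨hkfree, _⟩ := free_and_finite_of_fg_submodule (LinearMap.ker f)
    ((Module.Finite.iff_fg).mp hkfin)
  exact ⟨hRfree, hRfin, hkfree, hkfin, s, hs⟩
end

section
/- Let k be a field, R an integral domain containing k, and E a finite field extension of k such that S := R ⊗_k E is a Bézout domain. Then every finitely generated S-module M which is free as an R-module is free as an S-module. -/
/-!
`S = R ⊗[k] E` is finite, hence algebraic, over `R`, so every nonzero `s ∈ S` divides a nonzero
element of `R`; since `M` is `R`-free, it is therefore torsion-free over `S`. A finitely generated
torsion-free module over a domain embeds into some `Sⁿ`. Over a Bézout domain the image of the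
first coordinate is a finitely generated, hence principal and free, ideal, so it splits off and
induction on `n` shows that the module is free.
-/

open TensorProduct Module

theorem Module.IsTorsionFree.of_isAlgebraic (R S M : Type*) [CommRing R] [IsDomain R]
    [CommRing S] [Algebra R S] [Algebra.IsAlgebraic R S]
    [AddCommGroup M] [Module R M] [Module S M] [IsScalarTower R S M] [IsTorsionFree R M] :
    IsTorsionFree S M where
  isSMulRegular s hs := by
    obtain ⟨r, hr, t, hrt⟩ := (Algebra.IsAlgebraic.isAlgebraic (R := R) s).exists_nonzero_dvd
      (isRegular_iff_mem_nonZeroDivisors.mp hs)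
    intro x y hxy
    apply smul_right_injective M hr
    simp only [← algebraMap_smul S r, hrt, mul_comm s, mul_smul]
    exact congrArg (t • ·) hxy

theorem Submodule.exists_ne_zero_forall_smul_mem {R M ι : Type*} [CommRing R] [IsDomain R]
    [AddCommGroup M] [Module R M] [Finite ι] {s : ι → M} (hs : span R (Set.range s) = ⊤)
    (N : Submodule R M) (h : ∀ i, ∃ a ≠ (0 : R), a • s i ∈ N) :
    ∃ A ≠ (0 : R), ∀ x : M, A • x ∈ N := by
  classical
  have := Fintype.ofFinite ι
  choose a ha haN using h
  refine ⟨∏ i, a i, Finset.prod_ne_zero_iff.mpr fun i _ ↦ ha i, fun x ↦ ?_⟩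
  suffices ⊤ ≤ N.comap (LinearMap.lsmul R M (∏ i, a i)) from this mem_top
  rw [← hs, span_le]
  rintro _ ⟨i, rfl⟩
  rw [SetLike.mem_coe, mem_comap, LinearMap.lsmul_apply, Fintype.prod_eq_prod_compl_mul i,
    mul_smul]
  exact N.smul_mem _ (haN i)

theorem Module.Finite.exists_injective_fin_of_isTorsionFree {R M : Type*} [CommRing R]
    [IsDomain R] [AddCommGroup M] [Module R M] [Module.Finite R M] [IsTorsionFree R M] :
    ∃ (n : ℕ) (f : M →ₗ[R] Fin n → R), Function.Injective f := by
  obtain ⟨m, s, hs⟩ := Module.Finite.exists_fin (R := R) (M := M)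
  obtain ⟨I, hI, hmax⟩ := exists_maximal_linearIndepOn R s
  rw [Set.image_eq_range] at hmax
  obtain ⟨A, hA, hAN⟩ := Submodule.exists_ne_zero_forall_smul_mem hs
    (Submodule.span R (Set.range fun i : I ↦ s i)) fun i ↦ by
      by_cases hi : i ∈ I
      · exact ⟨1, one_ne_zero, by rw [one_smul]; exact Submodule.subset_span ⟨⟨i, hi⟩, rfl⟩⟩
      · exact hmax i hi
  let b := (Basis.span hI).reindex (Finite.equivFin I)
  exact ⟨_, b.equivFun.toLinearMap ∘ₗ (LinearMap.lsmul R M A).codRestrict _ hAN,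
    b.equivFun.injective.comp fun x y hxy ↦ smul_right_injective M hA (congrArg Subtype.val hxy)⟩

theorem LinearMap.nonempty_equiv_ker_prod_of_surjective {R M P : Type*} [Ring R]
    [AddCommGroup M] [Module R M] [AddCommGroup P] [Module R P] [Projective R P]
    (f : M →ₗ[R] P) (hf : Function.Surjective f) : Nonempty (M ≃ₗ[R] ker f × P) := by
  obtain ⟨l, hl⟩ := f.exists_rightInverse_of_surjective (range_eq_top.mpr hf)
  exact ⟨((exact_subtype_ker_map f).splitSurjectiveEquiv (ker f).injective_subtype ⟨l, hl⟩).1⟩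

namespace IsBezout

variable {S M : Type*} [CommRing S] [IsDomain S] [IsBezout S] [AddCommGroup M] [Module S M]

theorem free_of_fg {I : Ideal S} (hI : I.FG) : Free S I := by
  have := isPrincipal_of_FG I hI
  obtain rfl | hI := eq_or_ne I ⊥
  · infer_instance
  · exact .of_equiv (Ideal.isoBaseOfIsPrincipal hI)

theorem free_range [Module.Finite S M] (φ : M →ₗ[S] S) : Free S (LinearMap.range φ) :=
  free_of_fg (LinearMap.range_eq_map φ ▸ Module.Finite.fg_top.map φ)

theorem nonempty_equiv_ker_prod_range [Module.Finite S M] (φ : M →ₗ[S] S) :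
    Nonempty (M ≃ₗ[S] LinearMap.ker φ × LinearMap.range φ) := by
  have := free_range φ
  obtain ⟨e⟩ := φ.rangeRestrict.nonempty_equiv_ker_prod_of_surjective φ.surjective_rangeRestrict
  exact ⟨e.trans ((LinearEquiv.ofEq _ _ (LinearMap.ker_rangeRestrict φ)).prodCongr (.refl _ _))⟩

theorem free_of_injective_fin [Module.Finite S M] {n : ℕ} (f : M →ₗ[S] Fin n → S)
    (hf : Function.Injective f) : Free S M := by
  induction n generalizing M with
  | zero =>
    have : Subsingleton M := hf.subsingleton
    infer_instance
  | succ n ih =>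
    let g := (Fin.consLinearEquiv S fun _ : Fin (n + 1) ↦ S).symm.toLinearMap ∘ₗ f
    have hg : Function.Injective g := (Fin.consLinearEquiv S _).symm.injective.comp hf
    set φ := LinearMap.fst S S _ ∘ₗ g
    obtain ⟨e⟩ := nonempty_equiv_ker_prod_range φ
    have : Module.Finite S (LinearMap.ker φ) :=
      .of_surjective (LinearMap.fst S _ (LinearMap.range φ) ∘ₗ e.toLinearMap)
        (Prod.fst_surjective.comp e.surjective)
    have : Free S (LinearMap.ker φ) := by
      refine ih (LinearMap.snd S S _ ∘ₗ g ∘ₗ (LinearMap.ker φ).subtype) fun x y hxy ↦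
        Subtype.ext (hg (Prod.ext ?_ hxy))
      exact x.2.trans y.2.symm
    have := free_range φ
    exact .of_equiv e.symm

theorem free_of_isTorsionFree [Module.Finite S M] [IsTorsionFree S M] : Free S M :=
  have ⟨_, f, hf⟩ := Module.Finite.exists_injective_fin_of_isTorsionFree (R := S) (M := M)
  free_of_injective_fin f hf

end IsBezout

/-- Let `R` be a domain over a field `k` and `E` a finite field extension of `k` such
that `R ⊗[k] E` is a Bézout domain. Then every finitely generated `R ⊗[k] E`-module
which is free as an `R`-module is free as an `R ⊗[k] E`-module. -/
theorem free_over_tensor_of_free_over_base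
    (k R E M : Type*) [Field k] [CommRing R] [IsDomain R] [Algebra k R]
    [Field E] [Algebra k E] [FiniteDimensional k E]
    [IsDomain (R ⊗[k] E)] [IsBezout (R ⊗[k] E)]
    [AddCommGroup M] [Module (R ⊗[k] E) M] [Module.Finite (R ⊗[k] E) M]
    [Module R M] [IsScalarTower R (R ⊗[k] E) M] [Module.Free R M] :
    Module.Free (R ⊗[k] E) M := by
  have : Module.Finite R (R ⊗[k] E) := .base_change k R E
  have : IsTorsionFree (R ⊗[k] E) M := .of_isAlgebraic R (R ⊗[k] E) M
  exact IsBezout.free_of_isTorsionFree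
end

section
/- Let R be a commutative ring, f ≥ 1, and S = R^f with the ring automorphism φ cyclically shifting coordinates. Let M be an S-module equipped with an additive bijection Φ : M → M satisfying Φ(s·m) = φ(s)·Φ(m) for all s ∈ S, m ∈ M. Write eᵢ ∈ S for the i-th coordinate idempotent, so M = ⊕ᵢ eᵢM and Φ maps eᵢM bijectively onto e_{i+1}M. If e₀M is a free R-module of rank k with basis v₁, …, v_k, then the elements wⱼ = vⱼ + Φ(vⱼ) + Φ²(vⱼ) + ⋯ + Φ^{f-1}(vⱼ) (j = 1,…,k) form an S-basis of M; in particular M is free of rank k over S. -/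
/-!
Multiplication by the idempotent `eₜ` kills every term of `wⱼ = ∑ₛ Φˢ(vⱼ)` except `Φᵗ(vⱼ)`,
and semilinearity turns this into `eₜ c • wⱼ = Φᵗ(e₀ c • vⱼ)`, where `eₜ c ∈ S` is `c` in
coordinate `t` and `0` elsewhere. Since `Φᵗ` is a bijection `e₀M ≃ eₜM`, a relation among the
`wⱼ` (or a representation of an element of `eₜM` in terms of them) is the image under `Φᵗ` of
one among the `vⱼ` in `e₀M`, which the basis property of the `vⱼ` settles; and `M = ∑ₜ eₜM`.
-/

open Finset Fin.NatCast

lemma Pi.single_comp_sub {ι R : Type*} [AddGroup ι] [DecidableEq ι] [Zero R]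
    (a b : ι) (c : R) :
    (fun i => (Pi.single a c : ι → R) (i - b)) = (Pi.single (a + b) c : ι → R) := by
  funext i
  simp only [Pi.single_apply, sub_eq_iff_eq_add]

namespace ShiftSemilinear

variable {R : Type*} {f : ℕ} [NeZero f] {M : Type*}

section Semiring

variable [Semiring R] [AddCommMonoid M] [Module (Fin f → R) M] (Φ : AddMonoid.End M)
  (hsemi : ∀ (s : Fin f → R) (x : M), Φ (s • x) = (fun i => s (i - 1)) • Φ x)
include hsemi

lemma iterate_smul (t : ℕ) (s : Fin f → R) (x : M) :
    Φ^[t] (s • x) = (fun i => s (i - t)) • Φ^[t] x := by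
  induction t with
  | zero => simp
  | succ t ih =>
    rw [Function.iterate_succ_apply', Function.iterate_succ_apply', ih, hsemi]
    simp only [Nat.cast_succ, sub_sub, add_comm (1 : Fin f)]

lemma iterate_single_zero_smul (t : ℕ) (c : R) (x : M) :
    Φ^[t] ((Pi.single 0 c : Fin f → R) • x) =
      (Pi.single (t : Fin f) c : Fin f → R) • Φ^[t] x := by
  rw [iterate_smul Φ hsemi, Pi.single_comp_sub, zero_add]

lemma single_smul_sum_iterate {x : M}
    (hx : (Pi.single (0 : Fin f) (1 : R) : Fin f → R) • x = x) (t : Fin f) (c : R) :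
    (Pi.single t c : Fin f → R) • ∑ s ∈ range f, Φ^[s] x =
      Φ^[t] ((Pi.single 0 c : Fin f → R) • x) := by
  rw [iterate_single_zero_smul Φ hsemi, Fin.cast_val_eq_self, smul_sum]
  refine sum_eq_single_of_mem t.val (mem_range.mpr t.isLt) fun s hs hst => ?_
  have hne : t ≠ (s : Fin f) := by
    rintro rfl
    exact hst (Fin.val_cast_of_lt (mem_range.mp hs)).symm
  -- `Φˢ x` lies in `eₛM`, which `eₜ` annihilates
  rw [← hx, iterate_single_zero_smul Φ hsemi, smul_smul, ← Pi.single_mul_left,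
    Pi.single_eq_of_ne hne, mul_zero, Pi.single_zero, zero_smul]

lemma exists_iterate_eq_single_smul (hΦ : Function.Bijective Φ) (t : Fin f) (x : M) :
    ∃ u : M, (Pi.single (0 : Fin f) (1 : R) : Fin f → R) • u = u ∧
      Φ^[t] u = (Pi.single t (1 : R) : Fin f → R) • x := by
  obtain ⟨u, hu⟩ := (hΦ.iterate t).surjective ((Pi.single t (1 : R) : Fin f → R) • x)
  refine ⟨u, (hΦ.iterate t).injective ?_, hu⟩
  rw [iterate_single_zero_smul Φ hsemi, Fin.cast_val_eq_self, hu, smul_smul,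
    ← Pi.single_mul, one_mul]

lemma span_sum_iterate_eq_top (hΦ : Function.Bijective Φ) {k : ℕ} {v : Fin k → M}
    (hv0 : ∀ j, (Pi.single (0 : Fin f) (1 : R) : Fin f → R) • v j = v j)
    (hspan : ∀ x : M, (Pi.single (0 : Fin f) (1 : R) : Fin f → R) • x = x →
      ∃ c : Fin k → R, x = ∑ j, (Pi.single (0 : Fin f) (c j) : Fin f → R) • v j) :
    Submodule.span (Fin f → R) (Set.range fun j => ∑ t ∈ range f, Φ^[t] (v j)) = ⊤ := by
  refine Submodule.eq_top_iff'.mpr fun x => ?_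
  rw [← one_smul (Fin f → R) x, ← univ_sum_single (1 : Fin f → R), sum_smul]
  refine Submodule.sum_mem _ fun t _ => ?_
  obtain ⟨u, hu0, hu⟩ := exists_iterate_eq_single_smul Φ hsemi hΦ t x
  obtain ⟨c, rfl⟩ := hspan u hu0
  rw [Pi.one_apply, ← hu, ← AddMonoid.End.coe_pow, map_sum]
  refine Submodule.sum_mem _ fun j _ => ?_
  rw [AddMonoid.End.coe_pow, ← single_smul_sum_iterate Φ hsemi (hv0 j)]
  exact Submodule.smul_mem _ _ (Submodule.subset_span ⟨j, rfl⟩)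

end Semiring

lemma linearIndependent_sum_iterate [Ring R] [AddCommGroup M] [Module (Fin f → R) M]
    (Φ : AddMonoid.End M) (hΦ : Function.Injective Φ)
    (hsemi : ∀ (s : Fin f → R) (x : M), Φ (s • x) = (fun i => s (i - 1)) • Φ x)
    {k : ℕ} {v : Fin k → M}
    (hv0 : ∀ j, (Pi.single (0 : Fin f) (1 : R) : Fin f → R) • v j = v j)
    (hli : ∀ c : Fin k → R,
      ∑ j, (Pi.single (0 : Fin f) (c j) : Fin f → R) • v j = 0 → c = 0) :
    LinearIndependent (Fin f → R) fun j => ∑ t ∈ range f, Φ^[t] (v j) := by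
  refine Fintype.linearIndependent_iff.mpr fun g hg j => funext fun t => ?_
  have hproj : Φ^[t] (∑ j, (Pi.single 0 (g j t) : Fin f → R) • v j) = 0 :=
    calc Φ^[t] (∑ j, (Pi.single 0 (g j t) : Fin f → R) • v j)
        = ∑ j, (Pi.single t (g j t) : Fin f → R) • ∑ s ∈ range f, Φ^[s] (v j) := by
          rw [← AddMonoid.End.coe_pow, map_sum]
          simp only [AddMonoid.End.coe_pow, single_smul_sum_iterate Φ hsemi (hv0 _)]
      _ = (Pi.single t 1 : Fin f → R) • ∑ j, g j • ∑ s ∈ range f, Φ^[s] (v j) := by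
          simp only [smul_sum, smul_smul, ← Pi.single_mul_left, one_mul]
      _ = 0 := by rw [hg, smul_zero]
  have hzero := ((hΦ.iterate t).eq_iff' (iterate_map_zero Φ t)).mp hproj
  exact congrFun (hli (fun j => g j t) hzero) j

end ShiftSemilinear

open ShiftSemilinear in
/-- Descent for semilinear `Φ`-modules over `S = R^f` with `φ` the cyclic shift:
if `v₁, …, v_k` is an `R`-basis of the component `e₀M`, then the elements
`wⱼ = vⱼ + Φ(vⱼ) + ⋯ + Φ^{f-1}(vⱼ)` form an `S`-basis of `M`. -/
theorem basis_of_shift_semilinear_descent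
    {R : Type*} [CommRing R] {f : ℕ} [NeZero f]
    (M : Type*) [AddCommGroup M] [Module (Fin f → R) M]
    (Φ : M → M) (hbij : Function.Bijective Φ)
    (hadd : ∀ x y : M, Φ (x + y) = Φ x + Φ y)
    (hsemi : ∀ (s : Fin f → R) (x : M), Φ (s • x) = (fun i => s (i - 1)) • Φ x)
    {k : ℕ} (v : Fin k → M)
    (hv0 : ∀ j, (Pi.single (0 : Fin f) (1 : R) : Fin f → R) • v j = v j)
    (hli : ∀ c : Fin k → R,
      ∑ j, (Pi.single (0 : Fin f) (c j) : Fin f → R) • v j = 0 → c = 0)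
    (hspan : ∀ x : M, (Pi.single (0 : Fin f) (1 : R) : Fin f → R) • x = x →
      ∃ c : Fin k → R, x = ∑ j, (Pi.single (0 : Fin f) (c j) : Fin f → R) • v j) :
    LinearIndependent (Fin f → R) (fun j => ∑ t ∈ Finset.range f, Φ^[t] (v j)) ∧
    Submodule.span (Fin f → R)
      (Set.range (fun j => ∑ t ∈ Finset.range f, Φ^[t] (v j))) = ⊤ := by
  let Ψ : AddMonoid.End M := AddMonoidHom.mk' Φ hadd
  exact ⟨linearIndependent_sum_iterate Ψ hbij.injective hsemi hv0 hli,
    span_sum_iterate_eq_top Ψ hsemi hbij hv0 hspan⟩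
end
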